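/- The following two subsets of W coincide: {w ∈ 𝔚_p‡ : |(w⁻¹Δ) \ Φ_p| = 1} = {w ∈ W_p : Δ_p ⊆ w⁻¹(Δ_p ∪ Φ_p⁻)}, where Φ_p⁻ = −Φ_p⁺. -/

import Mathlib

open scoped Classical RealInnerProductSpace

noncomputable section

namespace Weng

/-- The completed Riemann zeta function `ζ̂(s) = π^(-s/2) Γ(s/2) ζ(s)`. -/
def zetaHat (s : ℂ) : ℂ := completedRiemannZeta s

/-- The entire Riemann xi function `ξ(s) = s (s-1) ζ̂(s)`
(written in terms of the entire function `Λ₀` so that the removable singularities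
at `s = 0, 1` are correctly filled in). -/
def xi (s : ℂ) : ℂ := s * (s - 1) * completedRiemannZeta₀ s + 1

variable (V : Type) [NormedAddCommGroup V] [InnerProductSpace ℝ V] [FiniteDimensional ℝ V]

/-- The coroot `α^∨ = 2 α / ⟨α, α⟩` of a vector `α`. -/
def coroot (α : V) : V := (2 / ⟪α, α⟫) • α

/-- Reflection in the hyperplane orthogonal to `α`. -/
def srefl (α : V) : V ≃ₗᵢ[ℝ] V := Submodule.reflection (ℝ ∙ α)ᗮ

variable {V}

/-- A reduced irreducible crystallographic root system `Φ` in a finite dimensional real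
inner product space `V`, together with a fundamental system `Δ = {α_1, …, α_r}` (indexed by
`Fin r`), the corresponding positive system `Φ⁺` (`Pos`), and the fundamental weights
`λ_1, …, λ_r` (`fw`). -/
structure RootSystemData (V : Type) [NormedAddCommGroup V] [InnerProductSpace ℝ V]
    [FiniteDimensional ℝ V] : Type where
  /-- the rank -/
  r : ℕ
  /-- the root system -/
  Φ : Finset V
  /-- the simple roots -/
  Δ : Fin r → V
  /-- the positive roots -/
  Pos : Finset V
  /-- the fundamental weights -/
  fw : Fin r → V
  hΔinj : Function.Injective Δ
  hΔPos : ∀ j, Δ j ∈ Pos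
  hspan : Submodule.span ℝ (Φ : Set V) = ⊤
  hzero : (0 : V) ∉ Φ
  hreduced : ∀ α ∈ Φ, ∀ t : ℝ, t • α ∈ (Φ : Set V) → t = 1 ∨ t = -1
  hcrys : ∀ α ∈ Φ, ∀ β ∈ Φ, ∃ n : ℤ, ⟪β, coroot V α⟫ = (n : ℝ)
  hrefl : ∀ α ∈ Φ, ∀ β ∈ Φ, β - ⟪β, coroot V α⟫ • α ∈ Φ
  hirred : ∀ S T : Finset V, S ∪ T = Φ → (∀ a ∈ S, ∀ b ∈ T, ⟪a, b⟫ = 0) →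
    S = ∅ ∨ T = ∅
  hPosSub : Pos ⊆ Φ
  hNegSub : ∀ α ∈ Pos, -α ∈ Φ
  hPosDec : ∀ α ∈ Φ, (α ∈ Pos ∧ -α ∉ Pos) ∨ (α ∉ Pos ∧ -α ∈ Pos)
  hPosComb : ∀ α ∈ Pos, ∃ c : Fin r → ℕ, α = ∑ j, (c j : ℝ) • Δ j
  hfw : ∀ i j, ⟪fw i, coroot V (Δ j)⟫ = if i = j then 1 else 0

namespace RootSystemData

variable {V : Type} [NormedAddCommGroup V] [InnerProductSpace ℝ V] [FiniteDimensional ℝ V]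
variable (d : RootSystemData V)

/-- The set `Φ⁻ = -Φ⁺` of negative roots, as a `Finset`. -/
def NegS : Finset V := d.Pos.image (fun α => -α)

/-- The Weyl vector `ρ = (1/2) Σ_{α ∈ Φ⁺} α`. -/
def rho : V := (2⁻¹ : ℝ) • ∑ α ∈ d.Pos, α

/-- The height `ht α^∨ = ⟨ρ, α^∨⟩` of the coroot of `α`. -/
def ht (α : V) : ℝ := ⟪d.rho, coroot V α⟫

/-- The Weyl group `W`, as the subgroup of the group of linear isometries of `V`
generated by the reflections in the simple roots. -/
def W : Subgroup (V ≃ₗᵢ[ℝ] V) := Subgroup.closure (Set.range fun j => srefl V (d.Δ j))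

/-- The subset `Δ_p = Δ \ {α_p}` of the simple roots, as a set of vectors. -/
def DeltaP (p : Fin d.r) : Set V := d.Δ '' {j | j ≠ p}

/-- `Δ_p` as a `Finset`. -/
def DeltaPFin (p : Fin d.r) : Finset V := (Finset.univ.filter (fun j => j ≠ p)).image d.Δ

/-- The subgroup `W_p` of `W` generated by the reflections in the simple roots in `Δ_p`. -/
def Wp (p : Fin d.r) : Subgroup (V ≃ₗᵢ[ℝ] V) :=
  Subgroup.closure ((fun j => srefl V (d.Δ j)) '' {j | j ≠ p})

/-- The root subsystem `Φ_p = Φ ∩ span_ℝ(Δ_p)`. -/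
def PhiP (p : Fin d.r) : Finset V :=
  d.Φ.filter (fun α => α ∈ Submodule.span ℝ (d.DeltaP p))

/-- The positive system `Φ_p⁺ = Φ⁺ ∩ Φ_p` of `Φ_p`. -/
def PhiPpos (p : Fin d.r) : Finset V := d.Pos ∩ d.PhiP p

/-- `ρ_p = (1/2) Σ_{α ∈ Φ_p⁺} α`. -/
def rhoP (p : Fin d.r) : V := (2⁻¹ : ℝ) • ∑ α ∈ d.PhiPpos p, α

/-- The constant `c_p = 2 ⟨λ_p - ρ_p, α_p^∨⟩`. -/
def cp (p : Fin d.r) : ℝ := 2 * ⟪d.fw p - d.rhoP p, coroot V (d.Δ p)⟫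

/-- The set `𝔚_p = {w ∈ W : Δ_p ⊆ w⁻¹(Δ ∪ Φ⁻)}`. -/
def frakW (p : Fin d.r) : Set (V ≃ₗᵢ[ℝ] V) :=
  {w | w ∈ d.W ∧ ∀ j : Fin d.r, j ≠ p →
    (w (d.Δ j) ∈ Set.range d.Δ ∨ w (d.Δ j) ∈ d.NegS)}

/-- `l_p(w) = |(Φ⁺ \ Φ_p⁺) ∩ w⁻¹ Φ⁻|`. -/
def lp (p : Fin d.r) (w : V ≃ₗᵢ[ℝ] V) : ℕ :=
  ((d.Pos \ d.PhiPpos p).filter (fun α => w α ∈ d.NegS)).card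

/-- `N_{p,w}(k,h) = #{α ∈ w⁻¹Φ⁻ : ⟨λ_p, α^∨⟩ = k, ht α^∨ = h}`. -/
def Npw (p : Fin d.r) (w : V ≃ₗᵢ[ℝ] V) (k h : ℝ) : ℕ :=
  (d.Φ.filter (fun α => w α ∈ d.NegS ∧ ⟪d.fw p, coroot V α⟫ = k ∧ d.ht α = h)).card

/-- `N_p(k,h) = #{α ∈ Φ : ⟨λ_p, α^∨⟩ = k, ht α^∨ = h}`. -/
def Np (p : Fin d.r) (k h : ℝ) : ℕ :=
  (d.Φ.filter (fun α => ⟪d.fw p, coroot V α⟫ = k ∧ d.ht α = h)).card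

/-- `M_p(k,h) = max_{w ∈ 𝔚_p} (N_{p,w}(k,h-1) - N_{p,w}(k,h))`. -/
def Mp (p : Fin d.r) (k h : ℝ) : ℤ :=
  sSup {n : ℤ | ∃ w ∈ d.frakW p, n = (d.Npw p w k (h - 1) : ℤ) - (d.Npw p w k h : ℤ)}

/-- The period `ω_p(s)`. -/
def omegaP (p : Fin d.r) (s : ℂ) : ℂ :=
  ∑ᶠ w ∈ d.frakW p,
    (∏ α ∈ d.Φ.filter (fun α => w α ∈ Set.range d.Δ ∧ α ∉ d.DeltaP p),
        ((⟪d.fw p, coroot V α⟫ : ℂ) * s + (d.ht α : ℂ) - 1)⁻¹) *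
    (∏ α ∈ d.Pos.filter (fun α => w α ∈ d.NegS ∧ α ∉ d.DeltaP p),
        zetaHat ((⟪d.fw p, coroot V α⟫ : ℂ) * s + (d.ht α : ℂ))) *
    (∏ α ∈ d.Φ.filter (fun α => -α ∈ d.Pos ∧ w (-α) ∈ d.NegS),
        (zetaHat ((⟪d.fw p, coroot V α⟫ : ℂ) * s + (d.ht α : ℂ)))⁻¹)

/-- The Weng zeta function
`ζ̂_p(s) = ω_p(s) ∏_{k ≥ 0} ∏_{h ≥ 2} ζ̂(k s + h)^{M_p(k,h)}`
(the product is finite: `M_p(k,h) = 0` outside of the displayed finite range). -/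
def zetaWeng (p : Fin d.r) (s : ℂ) : ℂ :=
  d.omegaP p s *
    ∏ k ∈ Finset.range (d.Φ.card + 2), ∏ h ∈ Finset.range (d.Φ.card + 2),
      (if 2 ≤ h then zetaHat ((k : ℂ) * s + (h : ℂ)) ^ (d.Mp p (k : ℝ) (h : ℝ)) else 1)


/-- `δ_{α,w} = 1` if `α ∈ w⁻¹Φ⁺`, and `δ_{α,w} = 0` if `α ∈ w⁻¹Φ⁻`. -/
def deltaIdx (w : V ≃ₗᵢ[ℝ] V) (α : V) : ℕ := if w α ∈ d.Pos then 1 else 0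

/-- `X̃_{p,w}(s) = ξ(2)^{|Δ_p ∩ w⁻¹Φ⁺|} ∏_{α ∈ Φ⁺ \ Δ_p} ξ(⟨λ_p,α^∨⟩ s + ht α^∨ + δ_{α,w})`. -/
def Xtilde (p : Fin d.r) (w : V ≃ₗᵢ[ℝ] V) (s : ℂ) : ℂ :=
  xi 2 ^ ((d.DeltaPFin p).filter (fun α => w α ∈ d.Pos)).card *
  ∏ α ∈ d.Pos.filter (fun α => α ∉ d.DeltaP p),
    xi ((⟪d.fw p, coroot V α⟫ : ℂ) * s + (d.ht α : ℂ) + (d.deltaIdx w α : ℂ))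

/-- The polynomial factor attached to a single `v ∈ 𝔚_p` appearing in `Q̃_{p,w}` and `Q_p`. -/
def Qfactor (p : Fin d.r) (v : V ≃ₗᵢ[ℝ] V) (s : ℂ) : ℂ :=
  (2 : ℂ) ^ ((d.DeltaPFin p).filter (fun α => v α ∈ d.Pos)).card *
  (∏ α ∈ d.Φ.filter (fun α => v α ∈ Set.range d.Δ ∧ α ∉ d.DeltaP p),
      ((⟪d.fw p, coroot V α⟫ : ℂ) * s + (d.ht α : ℂ) - 1)) *
  ∏ α ∈ d.Pos.filter (fun α => α ∉ d.DeltaP p),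
    ((⟪d.fw p, coroot V α⟫ : ℂ) * s + (d.ht α : ℂ) + (d.deltaIdx v α : ℂ)) *
      ((⟪d.fw p, coroot V α⟫ : ℂ) * s + (d.ht α : ℂ) + (d.deltaIdx v α : ℂ) - 1)

/-- The polynomial `Q̃_{p,w}(s)` (product of the `Qfactor`s over all `v ∈ 𝔚_p`, `v ≠ w`). -/
def Qtilde (p : Fin d.r) (w : V ≃ₗᵢ[ℝ] V) (s : ℂ) : ℂ :=
  ∏ᶠ v ∈ d.frakW p \ {w}, d.Qfactor p v s

/-- The polynomial `Q_p(s)` (product of the `Qfactor`s over all `v ∈ 𝔚_p`). -/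
def Qp (p : Fin d.r) (s : ℂ) : ℂ := ∏ᶠ v ∈ d.frakW p, d.Qfactor p v s

/-- The entire function `X_p(s) = Σ_{w ∈ 𝔚_p} Q̃_{p,w}(s) X̃_{p,w}(s)`. -/
def Xp (p : Fin d.r) (s : ℂ) : ℂ := ∑ᶠ w ∈ d.frakW p, d.Qtilde p w s * d.Xtilde p w s

/-- `X_{p,w}(s) = ∏_{α ∈ Φ⁺ \ Φ_p⁺} ξ(⟨λ_p,α^∨⟩ s + ht α^∨ + δ_{α,w})`. -/
def Xpw (p : Fin d.r) (w : V ≃ₗᵢ[ℝ] V) (s : ℂ) : ℂ :=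
  ∏ α ∈ d.Pos \ d.PhiPpos p,
    xi ((⟪d.fw p, coroot V α⟫ : ℂ) * s + (d.ht α : ℂ) + (d.deltaIdx w α : ℂ))

/-- The constant `C_{p,w} = ξ(2)^{|Δ_p ∩ w⁻¹Φ⁺|} ∏_{α ∈ Φ_p⁺ \ Δ_p} ξ(ht α^∨ + δ_{α,w})`. -/
def Cpw (p : Fin d.r) (w : V ≃ₗᵢ[ℝ] V) : ℂ :=
  xi 2 ^ ((d.DeltaPFin p).filter (fun α => w α ∈ d.Pos)).card *
  ∏ α ∈ (d.PhiPpos p).filter (fun α => α ∉ d.DeltaP p),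
    xi ((d.ht α : ℂ) + (d.deltaIdx w α : ℂ))

/-- `Q_{p,w}(s) = C_{p,w} Q̃_{p,w}(s)`. -/
def Qpw (p : Fin d.r) (w : V ≃ₗᵢ[ℝ] V) (s : ℂ) : ℂ := d.Cpw p w * d.Qtilde p w s

/-- `𝔚_p⁺ = {w ∈ 𝔚_p : l_p(w) < |Φ⁺ \ Φ_p⁺| / 2}`. -/
def frakWplus (p : Fin d.r) : Set (V ≃ₗᵢ[ℝ] V) :=
  {w ∈ d.frakW p | 2 * d.lp p w < (d.Pos \ d.PhiPpos p).card}

/-- `𝔚_p⁰ = {w ∈ 𝔚_p : l_p(w) = |Φ⁺ \ Φ_p⁺| / 2}`. -/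
def frakWzero (p : Fin d.r) : Set (V ≃ₗᵢ[ℝ] V) :=
  {w ∈ d.frakW p | 2 * d.lp p w = (d.Pos \ d.PhiPpos p).card}

/-- `𝔚_p‡ = {w ∈ 𝔚_p : l_p(w) = 0}`. -/
def frakWdag (p : Fin d.r) : Set (V ≃ₗᵢ[ℝ] V) :=
  {w ∈ d.frakW p | d.lp p w = 0}

/-- `E_p(s) = Σ_{w ∈ 𝔚_p⁺} Q_{p,w}(s) X_{p,w}(s) + (1/2) Σ_{w ∈ 𝔚_p⁰} Q_{p,w}(s) X_{p,w}(s)`. -/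
def Ep (p : Fin d.r) (s : ℂ) : ℂ :=
  (∑ᶠ w ∈ d.frakWplus p, d.Qpw p w s * d.Xpw p w s) +
    (2 : ℂ)⁻¹ * ∑ᶠ w ∈ d.frakWzero p, d.Qpw p w s * d.Xpw p w s

end RootSystemData

end Weng

open Weng

/-!
Every `w ∈ W_p` fixes `λ_p`, so it preserves the level `⟨λ_p, ·⟩` of roots. A root lies in `Φ_p`
exactly when its level is `0`, and a root of positive level is positive; hence `l_p(w) = 0`, and
`w⁻¹ α_p` is the only root outside `Φ_p` that `w` sends into `Δ`. Conversely, if `l_p(w) = 0`,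
write `w` as a word in simple reflections and induct on its length: if the last letter `s_j`
has `w α_j > 0`, the deletion condition shortens the word; otherwise `j ≠ p` and `w s_j` again
keeps the positive roots of positive level positive, so `w = (w s_j) s_j ∈ W_p`.
-/

namespace Weng

section Reflection

variable {V : Type} [NormedAddCommGroup V] [InnerProductSpace ℝ V]

lemma srefl_apply (α β : V) : srefl V α β = β - ⟪β, coroot V α⟫ • α := by
  rw [srefl, Submodule.reflection_orthogonal_apply, Submodule.reflection_singleton_apply,
    coroot, real_inner_smul_right, RCLike.ofReal_real_eq_id, id, ← real_inner_self_eq_norm_sq,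
    real_inner_comm, neg_sub, two_smul, ← add_smul]
  congr 2
  ring

lemma srefl_self (α : V) : srefl V α α = -α :=
  Submodule.reflection_orthogonalComplement_singleton_eq_neg α

lemma srefl_srefl (α v : V) : srefl V α (srefl V α v) = v :=
  Submodule.reflection_reflection _ v

lemma srefl_mul_self (α : V) : srefl V α * srefl V α = 1 :=
  Submodule.reflection_mul_reflection _

lemma srefl_inv (α : V) : (srefl V α)⁻¹ = srefl V α :=
  Submodule.reflection_inv

lemma coroot_map (w : V ≃ₗᵢ[ℝ] V) (α : V) : coroot V (w α) = w (coroot V α) := by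
  rw [coroot, coroot, map_smul, w.inner_map_map]

lemma srefl_map (w : V ≃ₗᵢ[ℝ] V) (α : V) : srefl V (w α) = w * srefl V α * w⁻¹ := by
  ext v
  have hv : v = w (w⁻¹ v) := (w.apply_symm_apply v).symm
  simp only [LinearIsometryEquiv.coe_mul, Function.comp_apply, srefl_apply, map_sub, map_smul,
    coroot_map]
  conv_lhs => rw [hv, w.inner_map_map]

end Reflection

end Weng

namespace Weng.RootSystemData

variable {V : Type} [NormedAddCommGroup V] [InnerProductSpace ℝ V] [FiniteDimensional ℝ V]
  (d : RootSystemData V)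

lemma Δ_mem_Φ (j : Fin d.r) : d.Δ j ∈ d.Φ := d.hPosSub (d.hΔPos j)

lemma mem_NegS {α : V} : α ∈ d.NegS ↔ -α ∈ d.Pos := by
  simp [NegS, neg_eq_iff_eq_neg]

lemma notMem_NegS_of_mem_Pos {α : V} (hα : α ∈ d.Pos) : α ∉ d.NegS := by
  rw [mem_NegS]
  rcases d.hPosDec α (d.hPosSub hα) with h | h
  exacts [h.2, absurd hα h.1]

lemma mem_Pos_or_mem_NegS {α : V} (hα : α ∈ d.Φ) : α ∈ d.Pos ∨ α ∈ d.NegS := by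
  rw [mem_NegS]
  rcases d.hPosDec α hα with h | h
  exacts [Or.inl h.1, Or.inr h.2]

lemma mem_Pos_of_notMem_NegS {α : V} (hα : α ∈ d.Φ) (h : α ∉ d.NegS) : α ∈ d.Pos :=
  (d.mem_Pos_or_mem_NegS hα).resolve_right h

lemma inner_fw_Δ (i j : Fin d.r) :
    ⟪d.fw i, d.Δ j⟫ = if i = j then ⟪d.Δ j, d.Δ j⟫ / 2 else 0 := by
  have hj : ⟪d.Δ j, d.Δ j⟫ ≠ 0 :=
    inner_self_ne_zero.2 fun h => d.hzero (h ▸ d.Δ_mem_Φ j)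
  have h := d.hfw i j
  rw [coroot, real_inner_smul_right] at h
  split_ifs at h ⊢ <;> field_simp at h <;> linarith

lemma inner_fw_Δ_self_pos (i : Fin d.r) : 0 < ⟪d.fw i, d.Δ i⟫ := by
  rw [inner_fw_Δ, if_pos rfl]
  exact half_pos (real_inner_self_pos.2 fun h => d.hzero (h ▸ d.Δ_mem_Φ i))

lemma inner_fw_Δ_of_ne {i j : Fin d.r} (h : i ≠ j) : ⟪d.fw i, d.Δ j⟫ = 0 := by
  rw [inner_fw_Δ, if_neg h]

lemma inner_fw_sum_smul_Δ (c : Fin d.r → ℝ) (i : Fin d.r) :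
    ⟪d.fw i, ∑ j, c j • d.Δ j⟫ = c i * ⟪d.fw i, d.Δ i⟫ := by
  rw [inner_sum, Finset.sum_eq_single i]
  · exact real_inner_smul_right _ _ _
  · intro j _ hj
    rw [real_inner_smul_right, d.inner_fw_Δ_of_ne (Ne.symm hj), mul_zero]
  · simp

lemma inner_fw_nonneg_of_mem_Pos {β : V} (hβ : β ∈ d.Pos) (i : Fin d.r) :
    0 ≤ ⟪d.fw i, β⟫ := by
  obtain ⟨c, rfl⟩ := d.hPosComb β hβ
  rw [inner_fw_sum_smul_Δ]
  exact mul_nonneg (Nat.cast_nonneg _) (d.inner_fw_Δ_self_pos i).le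

lemma mem_Pos_of_inner_fw_pos {β : V} (hβ : β ∈ d.Φ) {i : Fin d.r} (h : 0 < ⟪d.fw i, β⟫) :
    β ∈ d.Pos := by
  refine d.mem_Pos_of_notMem_NegS hβ fun hneg => ?_
  have := d.inner_fw_nonneg_of_mem_Pos ((d.mem_NegS).1 hneg) i
  rw [inner_neg_right] at this
  linarith

lemma inner_fw_srefl_Δ {i j : Fin d.r} (h : i ≠ j) (v : V) :
    ⟪d.fw i, srefl V (d.Δ j) v⟫ = ⟪d.fw i, v⟫ := by
  rw [srefl_apply, inner_sub_right, real_inner_smul_right, d.inner_fw_Δ_of_ne h, mul_zero,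
    sub_zero]

lemma srefl_Δ_mem_Φ (j : Fin d.r) {β : V} (hβ : β ∈ d.Φ) : srefl V (d.Δ j) β ∈ d.Φ := by
  rw [srefl_apply]
  exact d.hrefl _ (d.Δ_mem_Φ j) β hβ

lemma srefl_Δ_mem_Pos {j : Fin d.r} {β : V} (hβ : β ∈ d.Pos) (hne : β ≠ d.Δ j) :
    srefl V (d.Δ j) β ∈ d.Pos := by
  by_cases hi : ∃ i, i ≠ j ∧ 0 < ⟪d.fw i, β⟫
  · obtain ⟨i, hij, hi⟩ := hi
    refine d.mem_Pos_of_inner_fw_pos (d.srefl_Δ_mem_Φ j (d.hPosSub hβ)) (i := i) ?_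
    rwa [d.inner_fw_srefl_Δ hij]
  · simp only [not_exists, not_and, not_lt] at hi
    obtain ⟨c, hc⟩ := d.hPosComb β hβ
    have hc0 : ∀ i, i ≠ j → (c i : ℝ) = 0 := fun i hij => by
      have h := le_antisymm (hi i hij) (d.inner_fw_nonneg_of_mem_Pos hβ i)
      rw [hc, inner_fw_sum_smul_Δ] at h
      exact (mul_eq_zero.1 h).resolve_right (d.inner_fw_Δ_self_pos i).ne'
    have hβj : β = (c j : ℝ) • d.Δ j := by
      rw [hc, Finset.sum_eq_single j (fun i _ hij => by rw [hc0 i hij, zero_smul]) (by simp)]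
    exfalso
    rcases d.hreduced _ (d.Δ_mem_Φ j) _ (hβj ▸ d.hPosSub hβ) with h | h
    · exact hne (by rw [hβj, h, one_smul])
    · linarith [(c j).cast_nonneg (α := ℝ)]

lemma inner_fw_eq_zero_of_mem_span_DeltaP {p : Fin d.r} {v : V}
    (hv : v ∈ Submodule.span ℝ (d.DeltaP p)) : ⟪d.fw p, v⟫ = 0 := by
  induction hv using Submodule.span_induction with
  | mem x hx =>
    obtain ⟨j, hj, rfl⟩ := hx
    exact d.inner_fw_Δ_of_ne (Ne.symm hj)
  | zero => exact inner_zero_right _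
  | add x y _ _ hx hy => rw [inner_add_right, hx, hy, add_zero]
  | smul a x _ hx => rw [real_inner_smul_right, hx, mul_zero]

lemma mem_span_DeltaP_of_mem_Pos {p : Fin d.r} {β : V} (hβ : β ∈ d.Pos)
    (h : ⟪d.fw p, β⟫ = 0) : β ∈ Submodule.span ℝ (d.DeltaP p) := by
  obtain ⟨c, rfl⟩ := d.hPosComb β hβ
  rw [inner_fw_sum_smul_Δ] at h
  have hcp : (c p : ℝ) = 0 := (mul_eq_zero.1 h).resolve_right (d.inner_fw_Δ_self_pos p).ne'
  refine Submodule.sum_mem _ fun j _ => ?_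
  by_cases hj : j = p
  · rw [hj, hcp, zero_smul]
    exact Submodule.zero_mem _
  · exact Submodule.smul_mem _ _ (Submodule.subset_span ⟨j, hj, rfl⟩)

lemma mem_PhiP_iff {p : Fin d.r} {α : V} : α ∈ d.PhiP p ↔ α ∈ d.Φ ∧ ⟪d.fw p, α⟫ = 0 := by
  refine Finset.mem_filter.trans (and_congr_right fun hα => ⟨d.inner_fw_eq_zero_of_mem_span_DeltaP,
    fun h => ?_⟩)
  rcases d.mem_Pos_or_mem_NegS hα with hpos | hneg
  · exact d.mem_span_DeltaP_of_mem_Pos hpos h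
  · rw [mem_NegS] at hneg
    simpa using Submodule.neg_mem _
      (d.mem_span_DeltaP_of_mem_Pos hneg (by rw [inner_neg_right, h, neg_zero]))

lemma mem_PhiPpos_iff {p : Fin d.r} {α : V} :
    α ∈ d.PhiPpos p ↔ α ∈ d.Pos ∧ ⟪d.fw p, α⟫ = 0 := by
  rw [PhiPpos, Finset.mem_inter, mem_PhiP_iff]
  exact ⟨fun h => ⟨h.1, h.2.2⟩, fun h => ⟨h.1, d.hPosSub h.1, h.2⟩⟩

lemma lp_eq_zero_iff {p : Fin d.r} {w : V ≃ₗᵢ[ℝ] V} :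
    d.lp p w = 0 ↔ ∀ β ∈ d.Pos, 0 < ⟪d.fw p, β⟫ → w β ∉ d.NegS := by
  simp only [lp, Finset.card_eq_zero, Finset.filter_eq_empty_iff, Finset.mem_sdiff,
    mem_PhiPpos_iff, not_and, and_imp]
  refine forall₂_congr fun β hβ => ⟨fun h hpos => h fun _ h0 => hpos.ne' h0, fun h h0 => ?_⟩
  exact h ((d.inner_fw_nonneg_of_mem_Pos hβ p).lt_of_ne' (h0 hβ))

def wordProd (l : List (Fin d.r)) : V ≃ₗᵢ[ℝ] V := (l.map fun j => srefl V (d.Δ j)).prod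

@[simp]
lemma wordProd_nil : d.wordProd [] = 1 := rfl

@[simp]
lemma wordProd_cons (j : Fin d.r) (l : List (Fin d.r)) :
    d.wordProd (j :: l) = srefl V (d.Δ j) * d.wordProd l := by
  simp [wordProd]

@[simp]
lemma wordProd_append (l l' : List (Fin d.r)) :
    d.wordProd (l ++ l') = d.wordProd l * d.wordProd l' := by
  simp [wordProd]

lemma wordProd_reverse (l : List (Fin d.r)) : d.wordProd l.reverse = (d.wordProd l)⁻¹ := by
  induction l with
  | nil => simp
  | cons j l ih => simp [ih, srefl_inv]

lemma exists_wordProd_eq {w : V ≃ₗᵢ[ℝ] V} (hw : w ∈ d.W) : ∃ l, d.wordProd l = w := by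
  induction hw using Subgroup.closure_induction with
  | mem x hx =>
    obtain ⟨j, rfl⟩ := hx
    exact ⟨[j], by simp⟩
  | one => exact ⟨[], rfl⟩
  | mul x y _ _ hx hy =>
    obtain ⟨l, rfl⟩ := hx
    obtain ⟨l', rfl⟩ := hy
    exact ⟨l ++ l', d.wordProd_append l l'⟩
  | inv x _ hx =>
    obtain ⟨l, rfl⟩ := hx
    exact ⟨l.reverse, d.wordProd_reverse l⟩

lemma wordProd_apply_mem_Φ (l : List (Fin d.r)) {α : V} (hα : α ∈ d.Φ) :
    d.wordProd l α ∈ d.Φ := by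
  induction l with
  | nil => exact hα
  | cons j l ih => exact d.srefl_Δ_mem_Φ j ih

lemma apply_mem_Φ_of_mem_W {w : V ≃ₗᵢ[ℝ] V} (hw : w ∈ d.W) {α : V} (hα : α ∈ d.Φ) :
    w α ∈ d.Φ := by
  obtain ⟨l, rfl⟩ := d.exists_wordProd_eq hw
  exact d.wordProd_apply_mem_Φ l hα

lemma Wp_le_W (p : Fin d.r) : d.Wp p ≤ d.W :=
  Subgroup.closure_mono (Set.image_subset_range _ _)

lemma inner_fw_apply_of_mem_Wp {p : Fin d.r} {w : V ≃ₗᵢ[ℝ] V} (hw : w ∈ d.Wp p) (v : V) :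
    ⟪d.fw p, w v⟫ = ⟪d.fw p, v⟫ := by
  induction hw using Subgroup.closure_induction generalizing v with
  | mem x hx =>
    obtain ⟨j, hj, rfl⟩ := hx
    exact d.inner_fw_srefl_Δ (Ne.symm hj) v
  | one => rfl
  | mul x y _ _ hx hy => exact (hx (y v)).trans (hy v)
  | inv x _ hx => rw [← hx, LinearIsometryEquiv.coe_inv, x.apply_symm_apply]

/-- The deletion condition. -/
lemma exists_wordProd_eq_mul_srefl {j : Fin d.r} :
    ∀ l : List (Fin d.r), d.wordProd l (d.Δ j) ∈ d.NegS →
      ∃ l', d.wordProd l' = d.wordProd l * srefl V (d.Δ j) ∧ l'.length + 1 = l.length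
  | [], h => absurd h (d.notMem_NegS_of_mem_Pos (d.hΔPos j))
  | i :: t, h => by
    rw [wordProd_cons, LinearIsometryEquiv.coe_mul, Function.comp_apply] at h
    rcases d.mem_Pos_or_mem_NegS (d.wordProd_apply_mem_Φ t (d.Δ_mem_Φ j)) with hpos | hneg
    · have hti : d.wordProd t (d.Δ j) = d.Δ i := by
        by_contra hne
        exact d.notMem_NegS_of_mem_Pos (d.srefl_Δ_mem_Pos hpos hne) h
      refine ⟨t, ?_, rfl⟩
      rw [wordProd_cons, ← hti, srefl_map, mul_assoc, mul_assoc, inv_mul_cancel_left, mul_assoc,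
        srefl_mul_self, mul_one]
    · obtain ⟨t', ht', hlen⟩ := exists_wordProd_eq_mul_srefl t hneg
      exact ⟨i :: t', by rw [wordProd_cons, wordProd_cons, ht', mul_assoc], by simp [hlen]⟩

lemma wordProd_mem_Wp {p : Fin d.r} (l : List (Fin d.r))
    (h : ∀ β ∈ d.Pos, 0 < ⟪d.fw p, β⟫ → d.wordProd l β ∈ d.Pos) : d.wordProd l ∈ d.Wp p := by
  obtain rfl | ⟨t, j, rfl⟩ := l.eq_nil_or_concat'
  · exact one_mem _
  have hw : d.wordProd (t ++ [j]) = d.wordProd t * srefl V (d.Δ j) := by simp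
  have hwj : d.wordProd (t ++ [j]) (d.Δ j) = -d.wordProd t (d.Δ j) := by
    rw [hw, LinearIsometryEquiv.coe_mul, Function.comp_apply, srefl_self, map_neg]
  rcases d.mem_Pos_or_mem_NegS (d.wordProd_apply_mem_Φ (t ++ [j]) (d.Δ_mem_Φ j)) with
    hpos | hneg
  · rw [hwj, ← mem_NegS] at hpos
    obtain ⟨t', ht', hlen⟩ := d.exists_wordProd_eq_mul_srefl t hpos
    rw [hw, ← ht'] at h ⊢
    have : t'.length < (t ++ [j]).length := by simp; omega
    exact wordProd_mem_Wp t' h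
  · have hjp : j ≠ p := by
      rintro rfl
      exact d.notMem_NegS_of_mem_Pos (h _ (d.hΔPos j) (d.inner_fw_Δ_self_pos j)) hneg
    rw [hw]
    refine mul_mem (wordProd_mem_Wp t fun β hβ hβp => ?_) (Subgroup.subset_closure ⟨j, hjp, rfl⟩)
    have hne : β ≠ d.Δ j := by
      rintro rfl
      exact hβp.ne' (d.inner_fw_Δ_of_ne (Ne.symm hjp))
    have hsβ := h _ (d.srefl_Δ_mem_Pos hβ hne) (by rwa [d.inner_fw_srefl_Δ (Ne.symm hjp)])
    rwa [hw, LinearIsometryEquiv.coe_mul, Function.comp_apply, srefl_srefl] at hsβ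
termination_by l.length

lemma mem_Wp_of_lp_eq_zero {p : Fin d.r} {w : V ≃ₗᵢ[ℝ] V} (hw : w ∈ d.W) (h : d.lp p w = 0) :
    w ∈ d.Wp p := by
  obtain ⟨l, rfl⟩ := d.exists_wordProd_eq hw
  exact d.wordProd_mem_Wp l fun β hβ hβp => d.mem_Pos_of_notMem_NegS
    (d.wordProd_apply_mem_Φ l (d.hPosSub hβ)) (d.lp_eq_zero_iff.1 h β hβ hβp)

lemma lp_eq_zero_of_mem_Wp {p : Fin d.r} {w : V ≃ₗᵢ[ℝ] V} (hw : w ∈ d.Wp p) : d.lp p w = 0 := by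
  refine d.lp_eq_zero_iff.2 fun β hβ hβp => d.notMem_NegS_of_mem_Pos ?_
  refine d.mem_Pos_of_inner_fw_pos (d.apply_mem_Φ_of_mem_W (d.Wp_le_W p hw) (d.hPosSub hβ)) (i := p) ?_
  rwa [d.inner_fw_apply_of_mem_Wp hw]

lemma apply_Δ_mem_DeltaP_or_neg_mem_PhiPpos {p : Fin d.r} {w : V ≃ₗᵢ[ℝ] V}
    (hw : w ∈ d.Wp p) (hw' : w ∈ d.frakW p) {j : Fin d.r} (hj : j ≠ p) :
    w (d.Δ j) ∈ d.DeltaP p ∨ -w (d.Δ j) ∈ d.PhiPpos p := by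
  have h0 : ⟪d.fw p, w (d.Δ j)⟫ = 0 := by
    rw [d.inner_fw_apply_of_mem_Wp hw, d.inner_fw_Δ_of_ne (Ne.symm hj)]
  rcases hw'.2 j hj with ⟨k, hk⟩ | hneg
  · refine Or.inl ⟨k, fun hkp => (d.inner_fw_Δ_self_pos p).ne' ?_, hk⟩
    subst hkp
    rwa [hk]
  · exact Or.inr (d.mem_PhiPpos_iff.2 ⟨d.mem_NegS.1 hneg, by rw [inner_neg_right, h0, neg_zero]⟩)

lemma card_filter_apply_mem_range_Δ_notMem_PhiP {p : Fin d.r} {w : V ≃ₗᵢ[ℝ] V}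
    (hw : w ∈ d.Wp p) :
    (d.Φ.filter (fun α => w α ∈ Set.range d.Δ ∧ α ∉ d.PhiP p)).card = 1 := by
  refine Finset.card_eq_one.2 ⟨w⁻¹ (d.Δ p), Finset.ext fun α => ?_⟩
  simp only [Finset.mem_filter, Finset.mem_singleton, mem_PhiP_iff, not_and]
  constructor
  · rintro ⟨hα, ⟨k, hk⟩, hαp⟩
    obtain rfl : k = p := by
      by_contra hkp
      exact hαp hα (by rw [← d.inner_fw_apply_of_mem_Wp hw, ← hk, d.inner_fw_Δ_of_ne (Ne.symm hkp)])
    rw [hk, LinearIsometryEquiv.coe_inv, w.symm_apply_apply]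
  · rintro rfl
    have hw' : w⁻¹ ∈ d.Wp p := inv_mem hw
    refine ⟨d.apply_mem_Φ_of_mem_W (d.Wp_le_W p hw') (d.Δ_mem_Φ p),
      ⟨p, by rw [LinearIsometryEquiv.coe_inv, w.apply_symm_apply]⟩, fun _ h => ?_⟩
    rw [d.inner_fw_apply_of_mem_Wp hw'] at h
    exact (d.inner_fw_Δ_self_pos p).ne' h

end Weng.RootSystemData

/-- The sets `{w ∈ 𝔚_p‡ : |(w⁻¹Δ) \ Φ_p| = 1}` and
`{w ∈ W_p : Δ_p ⊆ w⁻¹(Δ_p ∪ Φ_p⁻)}` coincide. -/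
theorem weng_frakWdag_single_exit_eq_Wp_subset
    {V : Type} [NormedAddCommGroup V] [InnerProductSpace ℝ V] [FiniteDimensional ℝ V]
    (d : RootSystemData V) (p : Fin d.r) :
    {w : V ≃ₗᵢ[ℝ] V | w ∈ d.frakWdag p ∧
        (d.Φ.filter (fun α => w α ∈ Set.range d.Δ ∧ α ∉ d.PhiP p)).card = 1} =
    {w : V ≃ₗᵢ[ℝ] V | w ∈ d.Wp p ∧ ∀ j : Fin d.r, j ≠ p →
        (w (d.Δ j) ∈ d.DeltaP p ∨ -(w (d.Δ j)) ∈ d.PhiPpos p)} := by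
  ext w
  constructor
  · rintro ⟨⟨hfrak, hlp⟩, -⟩
    have hWp := d.mem_Wp_of_lp_eq_zero hfrak.1 hlp
    exact ⟨hWp, fun j hj => d.apply_Δ_mem_DeltaP_or_neg_mem_PhiPpos hWp hfrak hj⟩
  · rintro ⟨hWp, hΔp⟩
    refine ⟨⟨⟨d.Wp_le_W p hWp, fun j hj => ?_⟩, d.lp_eq_zero_of_mem_Wp hWp⟩,
      d.card_filter_apply_mem_range_Δ_notMem_PhiP hWp⟩
    exact (hΔp j hj).imp (fun ⟨k, _, hk⟩ => ⟨k, hk⟩) fun h => d.mem_NegS.2 (d.mem_PhiPpos_iff.1 h).1
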